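/- With notation as above, if additionally (v,w) = ε·(w,v) for a fixed sign ε and all v,w (ε = ±1), then [v₁,v₂]' = ε·ω(-1)·[v₂,v₁]' for all v₁, v₂. -/

import Mathlib

/-!
Moving `π w₀⁻¹` across the form costs the factor `ω (lam w₀⁻¹) = ω (-1)`, and the symmetry of
the form contributes `ε`; since `w₀` is an involution, `π w₀⁻¹ = π w₀` and the two sides match.
-/

theorem Representation.form_apply_left_eq_mul_form_apply_inv_right {k G V : Type*} [CommSemiring k]
    [Group G] [AddCommMonoid V] [Module k V] {π : Representation k G V} {χ : G →* kˣ}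
    {B : V →ₗ[k] V →ₗ[k] k} (hB : ∀ (g : G) (v w : V), B (π g v) (π g w) = (χ g : k) * B v w)
    (g : G) (v w : V) :
    B (π g v) w = (χ g : k) * B v (π g⁻¹ w) := by
  rw [← hB, Representation.self_inv_apply]

theorem stmt_18_general (G : Type*) [Group G] (lam : G →* ℂˣ) (ω : ℂˣ →* ℂˣ)
    (V : Type*) [AddCommGroup V] [Module ℂ V] (π : Representation ℂ G V)
    (w₀ : G) (hw₀ : w₀ * w₀ = 1) (hlamw₀ : lam w₀ = -1)
    (B : V →ₗ[ℂ] V →ₗ[ℂ] ℂ)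
    (hB : ∀ (g : G) (v w : V), B (π g v) (π g w) = (ω (lam g) : ℂ) * B v w)
    (ε : ℂ) (hsym : ∀ v w : V, B v w = ε * B w v) :
    ∀ v₁ v₂ : V,
      B v₁ (π w₀⁻¹ v₂) = ε * (ω (-1) : ℂ) * B v₂ (π w₀⁻¹ v₁) := by
  intro v₁ v₂
  have hinv : w₀⁻¹ = w₀ := inv_eq_of_mul_eq_one_right hw₀
  have hmove := Representation.form_apply_left_eq_mul_form_apply_inv_right (χ := ω.comp lam) hB
  calc B v₁ (π w₀⁻¹ v₂) = ε * B (π w₀ v₂) v₁ := by rw [hsym, hinv]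
    _ = ε * (ω (-1) : ℂ) * B v₂ (π w₀⁻¹ v₁) := by
      rw [hmove, MonoidHom.comp_apply, hlamw₀, mul_assoc]

theorem stmt_18 (G : Type*) [Group G] (lam : G →* ℂˣ) (ω : ℂˣ →* ℂˣ)
    (V : Type*) [AddCommGroup V] [Module ℂ V] (π : Representation ℂ G V)
    (w₀ : G) (hw₀ : w₀ * w₀ = 1) (hlamw₀ : lam w₀ = -1)
    (B : V →ₗ[ℂ] V →ₗ[ℂ] ℂ)
    (hB : ∀ (g : G) (v w : V), B (π g v) (π g w) = (ω (lam g) : ℂ) * B v w)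
    (ε : ℂ) (hε2 : ε ^ 2 = 1) (hsym : ∀ v w : V, B v w = ε * B w v) :
    ∀ v₁ v₂ : V,
      B v₁ (π w₀⁻¹ v₂) = ε * (ω (-1) : ℂ) * B v₂ (π w₀⁻¹ v₁) :=
  stmt_18_general G lam ω V π w₀ hw₀ hlamw₀ B hB ε hsym
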